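/- arXiv:2504.01215 — 9 statements merged into one kernel-verified Lean document; each statement's English description precedes it below -/
import Mathlib

section
/- Let 0 < r ≤ 1/√2 and β ∈ (0, π), and set d = 1 − 2r²(1−r²)(1+cos β) (which is positive). Then there exists φ ∈ [0, π] satisfying sin φ = sin β·(1−2r²)/d and cos φ = −(4r²(r²−1) + cos β·(1+(1−2r²)²))/(2d), and for this φ the matrix identity R_L(φ)·R_R(π−β)·R_L(φ) = R_L(π)·R_R(π+β)·R_L(π) holds. Consequently the path L_φ R_{π−β} L_φ connects the same initial and final configurations as the path L_π R_{π+β} L_π and has strictly smaller length: r(2φ + (π−β)) < r(2π + (π+β)). (This is the core of the proof that a non-trivial CCCCC path is non-optimal for r ≤ 1/√2.) -/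
open Real

noncomputable def OmegaL (r : ℝ) : Matrix (Fin 3) (Fin 3) ℝ :=
  !![0, -r, 0; r, 0, -Real.sqrt (1 - r ^ 2); 0, Real.sqrt (1 - r ^ 2), 0]

noncomputable def OmegaR (r : ℝ) : Matrix (Fin 3) (Fin 3) ℝ :=
  !![0, -r, 0; r, 0, Real.sqrt (1 - r ^ 2); 0, -Real.sqrt (1 - r ^ 2), 0]

noncomputable def OmegaG : Matrix (Fin 3) (Fin 3) ℝ :=
  !![0, -1, 0; 1, 0, 0; 0, 0, 0]

/-- Rotation matrix of a left turn of radius `r` and arc angle `φ`. -/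
noncomputable def RL (r φ : ℝ) : Matrix (Fin 3) (Fin 3) ℝ := NormedSpace.exp (φ • OmegaL r)

/-- Rotation matrix of a right turn of radius `r` and arc angle `φ`. -/
noncomputable def RR (r φ : ℝ) : Matrix (Fin 3) (Fin 3) ℝ := NormedSpace.exp (φ • OmegaR r)

/-- Rotation matrix of a great-circle arc of angle `φ`. -/
noncomputable def RG (φ : ℝ) : Matrix (Fin 3) (Fin 3) ℝ := NormedSpace.exp (φ • OmegaG)

/-!
Each turn generator `Ω` satisfies `Ω³ = -Ω`, so Rodrigues' formula
`exp (φ • Ω) = 1 + sin φ • Ω + (1 - cos φ) • Ω²` makes every rotation explicit.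
Since `RL r π` is an involution and `RL r φ = RL r π * RL r (φ + π)`, the identity reduces to
`RL r ψ * RR r (π - β) * RL r ψ = RR r (π + β)` with `ψ = φ + π`. The generators are
skew-symmetric, so `(RL r ψ)ᵀ = RL r (-ψ)` and `(RR r θ)ᵀ = RR r (-θ)`, and the reduced identity
follows once the rotation `RL r ψ * RR r (π - β)` is symmetric, i.e. a half-turn. Symmetry
amounts to three polynomial identities, which hold as soon as `d sin φ = (1 - 2r²) sin β` and
`d (1 + cos φ) = 1 - cos β`. Finally, the prescribed values of `sin φ` and `cos φ` lie on the
unit circle because `4 sin² β (1 - 2r²)² + N² = 4 d²` (`N` the numerator of `cos φ`).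
-/

open NormedSpace Matrix

section Rodrigues

variable {A : Type*} [Ring A] [Algebra ℝ A] {a : A}

theorem pow_two_mul_add_one_of_pow_three_eq_neg (ha : a ^ 3 = -a) (k : ℕ) :
    a ^ (2 * k + 1) = (-1 : ℝ) ^ k • a := by
  induction k with
  | zero => simp
  | succ k ih =>
    rw [show 2 * (k + 1) + 1 = 2 * k + 1 + 2 by ring, pow_add, ih, smul_mul_assoc,
      (pow_succ' a 2).symm.trans ha, pow_succ, mul_neg_one, smul_neg, neg_smul]

theorem pow_two_mul_add_two_of_pow_three_eq_neg (ha : a ^ 3 = -a) (k : ℕ) :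
    a ^ (2 * k + 2) = (-1 : ℝ) ^ k • a ^ 2 := by
  rw [pow_succ, pow_two_mul_add_one_of_pow_three_eq_neg ha, smul_mul_assoc, ← pow_two]

variable [TopologicalSpace A] [IsTopologicalRing A] [ContinuousSMul ℝ A] [T2Space A]

theorem exp_smul_eq_of_pow_three_eq_neg (ha : a ^ 3 = -a) (φ : ℝ) :
    exp (φ • a) = 1 + sin φ • a + (1 - cos φ) • a ^ 2 := by
  have hodd : HasSum (fun k : ℕ ↦ ((2 * k + 1).factorial : ℝ)⁻¹ • (φ • a) ^ (2 * k + 1))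
      (sin φ • a) := by
    convert (hasSum_sin φ).smul_const a using 2 with k
    rw [smul_pow, pow_two_mul_add_one_of_pow_three_eq_neg ha, smul_smul, smul_smul]
    congr 1
    ring
  -- `a ^ (2 * k) = (-1) ^ k • (-a ^ 2)` except at `k = 0`, where `1 + a ^ 2` has to be added.
  have heven : HasSum (fun k : ℕ ↦ ((2 * k).factorial : ℝ)⁻¹ • (φ • a) ^ (2 * k))
      (1 + (1 - cos φ) • a ^ 2) := by
    convert ((hasSum_cos φ).smul_const (-a ^ 2)).add (hasSum_ite_eq 0 (1 + a ^ 2)) using 1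
    · funext k
      rcases k with _ | k
      · simp
      · rw [smul_pow, show 2 * (k + 1) = 2 * k + 2 by ring,
          pow_two_mul_add_two_of_pow_three_eq_neg ha, smul_smul, smul_smul]
        simp only [Nat.add_eq_zero_iff, one_ne_zero, and_false, if_false, add_zero, smul_neg,
          ← neg_smul]
        congr 1
        ring
    · module
  rw [exp_eq_tsum ℝ]
  exact (heven.even_add_odd (f := fun n ↦ (n.factorial : ℝ)⁻¹ • (φ • a) ^ n) hodd).tsum_eq.trans
    (by abel)

end Rodrigues

namespace Matrix

theorem IsSymm.of_fin_three {α : Type*} {M : Matrix (Fin 3) (Fin 3) α}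
    (h₀₁ : M 0 1 = M 1 0) (h₀₂ : M 0 2 = M 2 0) (h₁₂ : M 1 2 = M 2 1) : M.IsSymm :=
  IsSymm.ext fun i j ↦ by fin_cases i <;> fin_cases j <;> simp [*]

variable {m 𝔸 : Type*} [Fintype m] [DecidableEq m] [NormedCommRing 𝔸] [NormedAlgebra ℚ 𝔸]
  [CompleteSpace 𝔸]

theorem exp_mul_exp_mul_exp_eq_exp_neg {A B : Matrix m m 𝔸} (hA : Aᵀ = -A) (hB : Bᵀ = -B)
    (h : (exp A * exp B).IsSymm) : exp A * exp B * exp A = exp (-B) := by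
  have hswap : exp A * exp B = exp (-B) * exp (-A) := by
    rw [← h.eq, transpose_mul, ← exp_transpose, ← exp_transpose, hA, hB]
  rw [hswap, mul_assoc, ← exp_add_of_commute _ _ (Commute.refl A).neg_left, neg_add_cancel,
    NormedSpace.exp_zero, mul_one]

end Matrix

theorem OmegaL_transpose (r : ℝ) : (OmegaL r)ᵀ = -OmegaL r := by
  ext i j; fin_cases i <;> fin_cases j <;> simp [OmegaL]

theorem OmegaR_transpose (r : ℝ) : (OmegaR r)ᵀ = -OmegaR r := by
  ext i j; fin_cases i <;> fin_cases j <;> simp [OmegaR]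

theorem OmegaL_pow_three {r : ℝ} (hr : r ^ 2 ≤ 1) : OmegaL r ^ 3 = -OmegaL r := by
  have hq : √(1 - r ^ 2) * √(1 - r ^ 2) = 1 - r ^ 2 := mul_self_sqrt (by linarith)
  ext i j
  fin_cases i <;> fin_cases j <;>
    simp [OmegaL, pow_three, mul_apply, Fin.sum_univ_three, ← mul_assoc, hq] <;> ring

theorem OmegaR_pow_three {r : ℝ} (hr : r ^ 2 ≤ 1) : OmegaR r ^ 3 = -OmegaR r := by
  have hq : √(1 - r ^ 2) * √(1 - r ^ 2) = 1 - r ^ 2 := mul_self_sqrt (by linarith)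
  ext i j
  fin_cases i <;> fin_cases j <;>
    simp [OmegaR, pow_three, mul_apply, Fin.sum_univ_three, ← mul_assoc, hq] <;> ring

theorem RL_eq {r : ℝ} (hr : r ^ 2 ≤ 1) (φ : ℝ) :
    RL r φ = 1 + sin φ • OmegaL r + (1 - cos φ) • OmegaL r ^ 2 :=
  exp_smul_eq_of_pow_three_eq_neg (OmegaL_pow_three hr) φ

theorem RR_eq {r : ℝ} (hr : r ^ 2 ≤ 1) (φ : ℝ) :
    RR r φ = 1 + sin φ • OmegaR r + (1 - cos φ) • OmegaR r ^ 2 :=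
  exp_smul_eq_of_pow_three_eq_neg (OmegaR_pow_three hr) φ

theorem isSymm_RL_add_pi_mul_RR_pi_sub {r φ β : ℝ} (hr : r ^ 2 ≤ 1)
    (hd : 1 - 2 * r ^ 2 * (1 - r ^ 2) * (1 + cos β) ≠ 0)
    (hs : (1 - 2 * r ^ 2 * (1 - r ^ 2) * (1 + cos β)) * sin φ = (1 - 2 * r ^ 2) * sin β)
    (hc : (1 - 2 * r ^ 2 * (1 - r ^ 2) * (1 + cos β)) * (1 + cos φ) = 1 - cos β) :
    (RL r (φ + π) * RR r (π - β)).IsSymm := by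
  rw [RL_eq hr, RR_eq hr, sin_add_pi, cos_add_pi, sin_pi_sub, cos_pi_sub]
  have hsb : sin β ^ 2 = 1 - cos β ^ 2 := sin_sq β
  have hq : √(1 - r ^ 2) ^ 2 = 1 - r ^ 2 := sq_sqrt (by linarith)
  simp only [OmegaL, OmegaR]
  set q := √(1 - r ^ 2)
  set d := 1 - 2 * r ^ 2 * (1 - r ^ 2) * (1 + cos β)
  refine IsSymm.of_fin_three ?_ ?_ ?_ <;>
    simp [pow_two, mul_apply, Fin.sum_univ_three] <;> refine mul_left_cancel₀ hd ?_
  · linear_combination 2 * r * (1 - r ^ 2 * (1 + cos β)) * hs + 2 * r ^ 3 * sin β * hc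
  · linear_combination 2 * r * q * sin β * hs - 2 * r * q * (1 - 2 * r ^ 2) * (1 + cos β) * hc
      - 2 * r * q * (1 + cos φ) * (1 + cos β) * d * hq + 2 * r * q * (1 - 2 * r ^ 2) * hsb
  · linear_combination 2 * q * (r ^ 2 * (1 + cos β) - cos β) * hs - 2 * q * (1 - r ^ 2) * sin β * hc
      - 2 * q * (sin φ * (1 + cos β) + sin β * (1 + cos φ)) * d * hq

theorem RL_mul_RL (r a b : ℝ) : RL r a * RL r b = RL r (a + b) := by
  rw [RL, RL, RL, add_smul,
    Matrix.exp_add_of_commute _ _ (((Commute.refl _).smul_left a).smul_right b)]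

theorem RL_add_two_pi {r : ℝ} (hr : r ^ 2 ≤ 1) (φ : ℝ) : RL r (φ + 2 * π) = RL r φ := by
  rw [RL_eq hr, RL_eq hr, sin_add_two_pi, cos_add_two_pi]

theorem RR_add_two_pi {r : ℝ} (hr : r ^ 2 ≤ 1) (φ : ℝ) : RR r (φ + 2 * π) = RR r φ := by
  rw [RR_eq hr, RR_eq hr, sin_add_two_pi, cos_add_two_pi]

theorem RL_mul_RR_mul_RL_eq {r φ β : ℝ} (hr : r ^ 2 ≤ 1)
    (hd : 1 - 2 * r ^ 2 * (1 - r ^ 2) * (1 + cos β) ≠ 0)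
    (hs : (1 - 2 * r ^ 2 * (1 - r ^ 2) * (1 + cos β)) * sin φ = (1 - 2 * r ^ 2) * sin β)
    (hc : (1 - 2 * r ^ 2 * (1 - r ^ 2) * (1 + cos β)) * (1 + cos φ) = 1 - cos β) :
    RL r φ * RR r (π - β) * RL r φ = RL r π * RR r (π + β) * RL r π := by
  have hhalf : RL r (φ + π) * RR r (π - β) * RL r (φ + π) = RR r (π + β) := by
    rw [show π + β = -(π - β) + 2 * π by ring, RR_add_two_pi hr]
    show _ = exp (-(π - β) • OmegaR r)
    rw [neg_smul]
    exact exp_mul_exp_mul_exp_eq_exp_neg (by rw [transpose_smul, OmegaL_transpose, smul_neg])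
      (by rw [transpose_smul, OmegaR_transpose, smul_neg])
      (isSymm_RL_add_pi_mul_RR_pi_sub hr hd hs hc)
  have hleft : RL r π * RL r (φ + π) = RL r φ := by
    rw [RL_mul_RL, show π + (φ + π) = φ + 2 * π by ring, RL_add_two_pi hr]
  have hright : RL r (φ + π) * RL r π = RL r φ := by
    rw [RL_mul_RL, add_assoc, ← two_mul, RL_add_two_pi hr]
  calc RL r φ * RR r (π - β) * RL r φ
      = RL r π * RL r (φ + π) * RR r (π - β) * (RL r (φ + π) * RL r π) := by rw [hleft, hright]
    _ = RL r π * (RL r (φ + π) * RR r (π - β) * RL r (φ + π)) * RL r π := by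
      simp only [mul_assoc]
    _ = RL r π * RR r (π + β) * RL r π := by rw [hhalf]

theorem exists_mem_Icc_cos_eq_sin_eq {x y : ℝ} (h : x ^ 2 + y ^ 2 = 1) (hy : 0 ≤ y) :
    ∃ φ ∈ Set.Icc 0 π, cos φ = x ∧ sin φ = y := by
  have hx : |x| ≤ 1 := sq_le_one_iff_abs_le_one x |>.mp (by nlinarith)
  refine ⟨arccos x, ⟨arccos_nonneg x, arccos_le_pi x⟩,
    cos_arccos (abs_le.mp hx).1 (abs_le.mp hx).2, ?_⟩
  rw [sin_arccos, ← h, add_sub_cancel_left, sqrt_sq hy]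

theorem stmt_0 (r β : ℝ) (hr : 0 < r) (hr' : r ≤ 1 / Real.sqrt 2)
    (hβ : β ∈ Set.Ioo (0 : ℝ) Real.pi) :
    0 < 1 - 2 * r ^ 2 * (1 - r ^ 2) * (1 + Real.cos β) ∧
    ∃ φ ∈ Set.Icc (0 : ℝ) Real.pi,
      Real.sin φ =
        Real.sin β * (1 - 2 * r ^ 2) / (1 - 2 * r ^ 2 * (1 - r ^ 2) * (1 + Real.cos β)) ∧
      Real.cos φ =
        -((4 * r ^ 2 * (r ^ 2 - 1) + Real.cos β * (1 + (1 - 2 * r ^ 2) ^ 2)) /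
          (2 * (1 - 2 * r ^ 2 * (1 - r ^ 2) * (1 + Real.cos β)))) ∧
      RL r φ * RR r (Real.pi - β) * RL r φ =
        RL r Real.pi * RR r (Real.pi + β) * RL r Real.pi ∧
      r * (2 * φ + (Real.pi - β)) < r * (2 * Real.pi + (Real.pi + β)) := by
  obtain ⟨hβ₀, hβπ⟩ := hβ
  have hr2 : r ^ 2 ≤ 1 / 2 := by
    simpa [div_pow] using pow_le_pow_left₀ hr.le hr' 2
  have hcos_lt : cos β < 1 := by
    simpa using cos_lt_cos_of_nonneg_of_le_pi le_rfl hβπ.le hβ₀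
  set d := 1 - 2 * r ^ 2 * (1 - r ^ 2) * (1 + cos β)
  set N := 4 * r ^ 2 * (r ^ 2 - 1) + cos β * (1 + (1 - 2 * r ^ 2) ^ 2)
  have hd : 0 < d := by nlinarith [neg_one_le_cos β, sq_nonneg (1 - 2 * r ^ 2)]
  have hunit : N ^ 2 + 4 * (sin β * (1 - 2 * r ^ 2)) ^ 2 = 4 * d ^ 2 := by
    linear_combination 4 * (1 - 2 * r ^ 2) ^ 2 * sin_sq_add_cos_sq β
  obtain ⟨φ, hφ, hcos, hsin⟩ := exists_mem_Icc_cos_eq_sin_eq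
    (x := -(N / (2 * d))) (y := sin β * (1 - 2 * r ^ 2) / d)
    (by field_simp; linear_combination hunit)
    (div_nonneg (mul_nonneg (sin_nonneg_of_nonneg_of_le_pi hβ₀.le hβπ.le) (by linarith)) hd.le)
  refine ⟨hd, φ, hφ, hsin, hcos, RL_mul_RR_mul_RL_eq (by linarith) hd.ne' ?_ ?_, ?_⟩
  · rw [hsin]; field_simp; ring
  · rw [hcos]; field_simp; ring
  · exact mul_lt_mul_of_pos_left (by linarith [hφ.2]) hr
end

section
/- Let 0 < r ≤ 1/√2 and set a₂ = −2√(1−2r²) and a₁ = √(1−2r²)·(1−√(1−2r²))/r. Then: (i) 2r·a₁ + a₂ = 2(2r²−1); (ii) a₂² = 4(1−2r²); (iii) a₁ ≥ 0 and a₂ ≤ 0; and (iv) 2r − 2a₁ − r·a₂ = (2/r)·(1−√(1−2r²))·(1−r²) > 0. -/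
theorem stmt_2 (r : ℝ) (hr : 0 < r) (hr' : r ≤ 1 / Real.sqrt 2)
    (a₁ a₂ : ℝ)
    (ha₂ : a₂ = -2 * Real.sqrt (1 - 2 * r ^ 2))
    (ha₁ : a₁ = Real.sqrt (1 - 2 * r ^ 2) * (1 - Real.sqrt (1 - 2 * r ^ 2)) / r) :
    2 * r * a₁ + a₂ = 2 * (2 * r ^ 2 - 1) ∧
    a₂ ^ 2 = 4 * (1 - 2 * r ^ 2) ∧
    0 ≤ a₁ ∧ a₂ ≤ 0 ∧
    2 * r - 2 * a₁ - r * a₂ =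
      2 / r * (1 - Real.sqrt (1 - 2 * r ^ 2)) * (1 - r ^ 2) ∧
    0 < 2 * r - 2 * a₁ - r * a₂ := by
  have h2 : (0:ℝ) < Real.sqrt 2 := Real.sqrt_pos.mpr (by norm_num)
  have hr2 : 2 * r ^ 2 ≤ 1 := by
    have h := mul_le_mul_of_nonneg_right hr' h2.le
    rw [div_mul_cancel₀ _ h2.ne'] at h
    nlinarith [Real.sq_sqrt (by norm_num : (0:ℝ) ≤ 2)]
  set s := Real.sqrt (1 - 2 * r ^ 2) with hs
  have hs0 : 0 ≤ s := Real.sqrt_nonneg _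
  have hs2 : s ^ 2 = 1 - 2 * r ^ 2 := Real.sq_sqrt (by linarith)
  have hs1 : s < 1 := by nlinarith
  subst ha₁ ha₂
  refine ⟨by field_simp; nlinarith, by nlinarith, ?_, by nlinarith, ?_, ?_⟩
  · exact div_nonneg (mul_nonneg hs0 (by linarith)) hr.le
  · field_simp; nlinarith
  · have : 0 < 2 / r * (1 - s) * (1 - r ^ 2) := by
      apply mul_pos (mul_pos (by positivity) (by linarith))
      nlinarith
    have heq : 2 * r - 2 * (s * (1 - s) / r) - r * (-2 * s) =
        2 / r * (1 - s) * (1 - r ^ 2) := by field_simp; nlinarith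
    linarith [heq ▸ this]
end

section
/- Let 1/√2 < r ≤ √3/2 and set a₂ = 2√2·r·√(3−4r²) and a₁ = 4r² − 3 − √2·√(3−4r²). Then: (i) 2r·a₁ + a₂ = 2r(4r²−3); (ii) 2r·a₁² + 2a₁a₂ + r·a₂² = 2r(3−4r²); (iii) a₁ ≤ 0 and a₂ ≥ 0; and (iv) 2r − 2r·a₁ − a₂ = 8r(1−r²) > 0. -/
theorem stmt_3 (r : ℝ) (hr : 1 / Real.sqrt 2 < r) (hr' : r ≤ Real.sqrt 3 / 2)
    (a₁ a₂ : ℝ)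
    (ha₂ : a₂ = 2 * Real.sqrt 2 * r * Real.sqrt (3 - 4 * r ^ 2))
    (ha₁ : a₁ = 4 * r ^ 2 - 3 - Real.sqrt 2 * Real.sqrt (3 - 4 * r ^ 2)) :
    2 * r * a₁ + a₂ = 2 * r * (4 * r ^ 2 - 3) ∧
    2 * r * a₁ ^ 2 + 2 * a₁ * a₂ + r * a₂ ^ 2 = 2 * r * (3 - 4 * r ^ 2) ∧
    a₁ ≤ 0 ∧ 0 ≤ a₂ ∧
    2 * r - 2 * r * a₁ - a₂ = 8 * r * (1 - r ^ 2) ∧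
    0 < 2 * r - 2 * r * a₁ - a₂ := by
  have hrpos : 0 < r := lt_trans (by positivity) hr
  have hr2 : r ^ 2 ≤ 3 / 4 := by
    have h3 : (Real.sqrt 3 / 2) ^ 2 = 3 / 4 := by
      rw [div_pow, Real.sq_sqrt (by norm_num : (3:ℝ) ≥ 0)]; norm_num
    nlinarith [sq_nonneg (r - Real.sqrt 3 / 2), Real.sqrt_nonneg 3]
  have hs : 0 ≤ 3 - 4 * r ^ 2 := by linarith
  set s := Real.sqrt (3 - 4 * r ^ 2) with hsdef
  have hs0 : 0 ≤ s := Real.sqrt_nonneg _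
  have hs2 : s ^ 2 = 3 - 4 * r ^ 2 := Real.sq_sqrt hs
  set t := Real.sqrt 2 with htdef
  have ht0 : 0 ≤ t := Real.sqrt_nonneg _
  have ht2 : t ^ 2 = 2 := Real.sq_sqrt (by norm_num)
  refine ⟨by rw [ha₁, ha₂]; ring, ?_, ?_, ?_, by rw [ha₁, ha₂]; ring, ?_⟩
  · rw [ha₁, ha₂]; linear_combination (4*r^3 - 2*r)*s^2 * ht2 + (8*r^3 - 4*r) * hs2
  · rw [ha₁]; nlinarith
  · rw [ha₂]; positivity
  · have : 2 * r - 2 * r * a₁ - a₂ = 8 * r * (1 - r ^ 2) := by rw [ha₁, ha₂]; ring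
    rw [this]; nlinarith
end

section
/- For all r with 1/√2 < r ≤ √3/2 and all β ∈ (0, π), one has g(r,β) := 5 − 10r² + 6r⁴ + 4(2r²−1)(r²−1)cos β − 2r²(1−r²)cos 2β > 0. -/
theorem stmt_7 (r β : ℝ) (hr : 1 / Real.sqrt 2 < r) (hr' : r ≤ Real.sqrt 3 / 2)
    (hβ : β ∈ Set.Ioo (0 : ℝ) Real.pi) :
    0 < 5 - 10 * r ^ 2 + 6 * r ^ 4 + 4 * (2 * r ^ 2 - 1) * (r ^ 2 - 1) * Real.cos β -
      2 * r ^ 2 * (1 - r ^ 2) * Real.cos (2 * β) := by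
  obtain ⟨hβ0, hβπ⟩ := hβ
  have hs2 : Real.sqrt 2 ^ 2 = 2 := Real.sq_sqrt (by norm_num)
  have hs3 : Real.sqrt 3 ^ 2 = 3 := Real.sq_sqrt (by norm_num)
  have hs2pos : (0:ℝ) < Real.sqrt 2 := Real.sqrt_pos.mpr (by norm_num)
  have hs3pos : (0:ℝ) ≤ Real.sqrt 3 := Real.sqrt_nonneg 3
  have hrpos : 0 < r := lt_trans (by positivity) hr
  have h1 : 1 < r * Real.sqrt 2 := (div_lt_iff₀ hs2pos).mp hr
  have hx1 : 1/2 < r^2 := by nlinarith [h1, hs2, mul_pos hrpos hs2pos]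
  have hx2 : r^2 ≤ 3/4 := by nlinarith
  have hc1 : Real.cos β < 1 := by
    have := Real.cos_lt_cos_of_nonneg_of_le_pi le_rfl hβπ.le hβ0
    simpa using this
  have hc2 : -1 < Real.cos β := by
    have := Real.cos_lt_cos_of_nonneg_of_le_pi hβ0.le le_rfl hβπ
    simpa using this
  rw [Real.cos_two_mul]
  have hy : (0:ℝ) < 1 - r^2 := by nlinarith
  have hr2 : (0:ℝ) < r^2 := by positivity
  nlinarith [mul_nonneg (sub_nonneg.2 hc2.le) (sq_nonneg (4*r^2 - 3)),
    mul_pos (mul_pos (mul_pos hr2 hy) (by linarith : (0:ℝ) < 1 - Real.cos β))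
      (by linarith : (0:ℝ) < 1 + Real.cos β)]
end

section
/- Let U > 0 and let λ ≥ 0 satisfy λ < U/(1+U²). Suppose H : ℝ → ℝ is differentiable and for every s ∈ ℝ, (|H(s)| − U/(1+U²))² + (H′(s))²/(1+U²) = λ². Then H(s) ≠ 0 for every s ∈ ℝ; consequently, if H(0) < 0 then H(s) < 0 for all s ∈ ℝ, and if H(0) > 0 then H(s) > 0 for all s ∈ ℝ. In particular H is not identically zero. -/
lemma no_zero_sign_neg {H : ℝ → ℝ} (hc : Continuous H) (hne : ∀ s : ℝ, H s ≠ 0)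
    (h0 : H 0 < 0) : ∀ s : ℝ, H s < 0 := by
  intro s
  by_contra hs
  push_neg at hs
  have hs' : 0 < H s := lt_of_le_of_ne hs (fun h => hne s h.symm)
  rcases le_total 0 s with h | h
  · have := intermediate_value_Icc h hc.continuousOn (by constructor <;> linarith : (0:ℝ) ∈ Set.Icc (H 0) (H s))
    obtain ⟨x, _, hx⟩ := this
    exact hne x hx
  · have := intermediate_value_Icc' h hc.continuousOn (by constructor <;> linarith : (0:ℝ) ∈ Set.Icc (H 0) (H s))
    obtain ⟨x, _, hx⟩ := this
    exact hne x hx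

theorem stmt_9 (U lam : ℝ) (hU : 0 < U) (hlam0 : 0 ≤ lam)
    (hlam : lam < U / (1 + U ^ 2))
    (H : ℝ → ℝ) (hdiff : Differentiable ℝ H)
    (hphase : ∀ s : ℝ,
      (|H s| - U / (1 + U ^ 2)) ^ 2 + (deriv H s) ^ 2 / (1 + U ^ 2) = lam ^ 2) :
    (∀ s : ℝ, H s ≠ 0) ∧
    (H 0 < 0 → ∀ s : ℝ, H s < 0) ∧
    (H 0 > 0 → ∀ s : ℝ, H s > 0) ∧
    ¬(∀ s : ℝ, H s = 0) := by
  have hUpos : 0 < U / (1 + U ^ 2) := by positivity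
  have hne : ∀ s : ℝ, H s ≠ 0 := by
    intro s hzero
    have h := hphase s
    rw [hzero] at h
    simp only [abs_zero, zero_sub] at h
    have h1 : 0 ≤ (deriv H s) ^ 2 / (1 + U ^ 2) := by positivity
    have h2 : (U / (1 + U ^ 2)) ^ 2 ≤ lam ^ 2 := by nlinarith [neg_sq (U / (1 + U ^ 2))]
    nlinarith
  have hc : Continuous H := hdiff.continuous
  refine ⟨hne, no_zero_sign_neg hc hne, ?_, fun hall => hne 0 (hall 0)⟩
  intro h0 s
  have := no_zero_sign_neg (H := fun t => -H t) (by continuity)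
    (fun t h => hne t (by simpa using neg_eq_zero.mp h)) (by simpa using h0) s
  simpa using this
end

section
/- Let U > 0 and let λ > U/(1+U²). Set σ = U/((1+U²)λ) and c = √(λ² − U²/(1+U²)²)/λ, so that σ, c > 0 and σ² + c² = 1. If x₁, x₂ ∈ ℝ satisfy sin x₁ = σ, cos x₁ = −c, sin x₂ = σ, cos x₂ = c, and 0 < x₂ − x₁ < 2π, then x₂ − x₁ = π + 2·arctan(U/√(λ²(1+U²)² − U²)), and this value lies strictly between π and 2π. -/
theorem stmt_10 (U lam : ℝ) (hU : 0 < U) (hlam : U / (1 + U ^ 2) < lam)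
    (σ c : ℝ)
    (hσ : σ = U / ((1 + U ^ 2) * lam))
    (hc : c = Real.sqrt (lam ^ 2 - U ^ 2 / (1 + U ^ 2) ^ 2) / lam) :
    0 < σ ∧ 0 < c ∧ σ ^ 2 + c ^ 2 = 1 ∧
    ∀ x₁ x₂ : ℝ,
      Real.sin x₁ = σ → Real.cos x₁ = -c →
      Real.sin x₂ = σ → Real.cos x₂ = c →
      0 < x₂ - x₁ → x₂ - x₁ < 2 * Real.pi →
      x₂ - x₁ =
        Real.pi + 2 * Real.arctan (U / Real.sqrt (lam ^ 2 * (1 + U ^ 2) ^ 2 - U ^ 2)) ∧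
      Real.pi < x₂ - x₁ ∧ x₂ - x₁ < 2 * Real.pi := by
  have h1U : (0:ℝ) < 1 + U ^ 2 := by positivity
  have hlampos : 0 < lam := lt_trans (by positivity) hlam
  have hUlt : U < lam * (1 + U ^ 2) := by
    have := (div_lt_iff₀ h1U).mp hlam
    linarith
  have hD : 0 < lam ^ 2 * (1 + U ^ 2) ^ 2 - U ^ 2 := by nlinarith
  have hD2 : 0 < lam ^ 2 - U ^ 2 / (1 + U ^ 2) ^ 2 := by
    rw [sub_pos, div_lt_iff₀ (by positivity)]
    nlinarith
  have hσpos : 0 < σ := by rw [hσ]; positivity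
  have hcpos : 0 < c := by
    rw [hc]
    exact div_pos (Real.sqrt_pos.mpr hD2) hlampos
  have hc2 : c ^ 2 = (lam ^ 2 - U ^ 2 / (1 + U ^ 2) ^ 2) / lam ^ 2 := by
    rw [hc, div_pow, Real.sq_sqrt hD2.le]
  have hpyth : σ ^ 2 + c ^ 2 = 1 := by
    rw [hσ, hc2]
    field_simp
    ring
  refine ⟨hσpos, hcpos, hpyth, ?_⟩
  intro x₁ x₂ hs1 hc1 hs2 hc2' hpos h2π
  set t := U / Real.sqrt (lam ^ 2 * (1 + U ^ 2) ^ 2 - U ^ 2) with ht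
  have htpos : 0 < t := by rw [ht]; positivity
  have ht2 : t ^ 2 = U ^ 2 / (lam ^ 2 * (1 + U ^ 2) ^ 2 - U ^ 2) := by
    rw [ht, div_pow, Real.sq_sqrt hD.le]
  set β := 2 * Real.arctan t with hβ
  have hβpos : 0 < β := by
    have : Real.arctan 0 < Real.arctan t := Real.arctan_strictMono htpos
    rw [Real.arctan_zero] at this
    rw [hβ]; linarith
  have hβlt : β < Real.pi := by
    have := Real.arctan_lt_pi_div_two t
    rw [hβ]; linarith
  -- cos β
  have hcosβ : Real.cos β = 1 - 2 * (U ^ 2 / (lam ^ 2 * (1 + U ^ 2) ^ 2)) := by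
    rw [hβ, Real.cos_two_mul']
    have hs : Real.sin (Real.arctan t) ^ 2 = t ^ 2 / (1 + t ^ 2) := by
      rw [Real.sin_arctan, div_pow, Real.sq_sqrt (by positivity)]
    have hc' : Real.cos (Real.arctan t) ^ 2 = 1 - t ^ 2 / (1 + t ^ 2) := by
      have := Real.sin_sq_add_cos_sq (Real.arctan t)
      linarith [hs]
    rw [hc', hs, ht2]
    have h0 : lam ^ 2 * (1 + U ^ 2) ^ 2 - U ^ 2 ≠ 0 := ne_of_gt hD
    field_simp
    ring
  -- cos and sin of d = x₂ - x₁
  have hcosd : Real.cos (x₂ - x₁) = σ ^ 2 - c ^ 2 := by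
    rw [Real.cos_sub, hc1, hc2', hs1, hs2]; ring
  have hsind : Real.sin (x₂ - x₁) = -(2 * σ * c) := by
    rw [Real.sin_sub, hc1, hc2', hs1, hs2]; ring
  have hsinneg : Real.sin (x₂ - x₁) < 0 := by
    rw [hsind]; nlinarith
  have hdgtπ : Real.pi < x₂ - x₁ := by
    by_contra h
    push_neg at h
    exact absurd (Real.sin_nonneg_of_nonneg_of_le_pi hpos.le h) (not_le.mpr hsinneg)
  -- cos (π + β) equals σ² - c²
  have hσ2 : σ ^ 2 = U ^ 2 / (lam ^ 2 * (1 + U ^ 2) ^ 2) := by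
    rw [hσ, div_pow]; ring_nf
  have hcosπβ : Real.cos (Real.pi + β) = σ ^ 2 - c ^ 2 := by
    rw [add_comm, Real.cos_add_pi, hcosβ]
    have hc2' : c ^ 2 = 1 - σ ^ 2 := by linarith
    rw [hc2', hσ2]
    ring
  -- injectivity of cos on [π, 2π] via 2π - x
  have key : x₂ - x₁ = Real.pi + β := by
    have h1 : Real.cos (2 * Real.pi - (x₂ - x₁)) = Real.cos (2 * Real.pi - (Real.pi + β)) := by
      rw [Real.cos_two_pi_sub, Real.cos_two_pi_sub, hcosd, hcosπβ]
    have hmem1 : 2 * Real.pi - (x₂ - x₁) ∈ Set.Icc 0 Real.pi :=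
      ⟨by linarith, by linarith⟩
    have hmem2 : 2 * Real.pi - (Real.pi + β) ∈ Set.Icc 0 Real.pi :=
      ⟨by linarith, by linarith⟩
    have := Real.injOn_cos hmem1 hmem2 h1
    linarith
  exact ⟨key, hdgtπ, by linarith⟩
end

section
/- For every r ∈ (0,1) and every β ∈ ℝ, with q = √(1−r²), the product R_L(π)·R_R(π+β)·R_L(π) equals the 3×3 matrix with entries: (1,1) = (1−4r²)²(1−r²) − r²(3−4r²)² cos β; (1,2) = r(4r²−3) sin β; (1,3) = r·q·(4r²−1)(4r²−3)(1+cos β); (2,1) = −r(4r²−3) sin β; (2,2) = −cos β; (2,3) = q(4r²−1) sin β; (3,1) = r·q·(4r²−1)(4r²−3)(1+cos β); (3,2) = −q(4r²−1) sin β; (3,3) = r²(3−4r²)² − (4r²−1)²(1−r²) cos β. -/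
open Real

/-!
`Ω_L` and `Ω_R` are the cross-product matrices of the unit vectors `(±q, 0, r)`, so `Ω ^ 3 = -Ω`.
For any such element of a real Banach algebra, Rodrigues' formula
`exp (φ • Ω) = 1 + sin φ • Ω + (1 - cos φ) • Ω ^ 2` holds; it is the image of
`exp (φ i, 0) = (cos φ + i sin φ, 1)` under an algebra map `ℂ × ℝ → 𝔸` sending `(i, 0)` to `Ω`.
With this closed form, both sides of the identity are polynomials in `r, q, cos β, sin β`
that agree modulo `q ^ 2 = 1 - r ^ 2`.
-/

section Rodrigues

variable {𝔸 : Type*} [NormedRing 𝔸] [NormedAlgebra ℝ 𝔸] {A : 𝔸}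

/-- `P = -A ^ 2` is an idempotent on whose range `A` is a square root of `-1` and which `A`
annihilates on the complement, so `(z, t) ↦ re z • P + im z • A + t • (1 - P)` is multiplicative. -/
noncomputable def complexProdAlgHomOfPowThree (hA : A ^ 3 = -A) : ℂ × ℝ →ₐ[ℝ] 𝔸 :=
  AlgHom.ofLinearMap
    ((Complex.reLm.smulRight (-A ^ 2) + Complex.imLm.smulRight A).coprod
      (LinearMap.id.smulRight (1 + A ^ 2)))
    (by simp)
    (by
      have h2 : A * A = A ^ 2 := (sq A).symm
      have h3 : A * A ^ 2 = -A := by rw [← pow_succ', hA]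
      have h3' : A ^ 2 * A = -A := by rw [← pow_succ, hA]
      have h4 : A ^ 2 * A ^ 2 = -A ^ 2 := by rw [← pow_add, pow_succ, hA, neg_mul, ← sq]
      rintro ⟨z, t⟩ ⟨w, u⟩
      simp only [LinearMap.coprod_apply, LinearMap.add_apply, LinearMap.smulRight_apply,
        Complex.reLm_coe, Complex.imLm_coe, LinearMap.id_apply, Prod.fst_mul, Prod.snd_mul,
        Complex.mul_re, Complex.mul_im, add_mul, mul_add, smul_mul_smul_comm, neg_mul, mul_neg,
        one_mul, mul_one, h2, h3, h3', h4, neg_neg]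
      module)

lemma complexProdAlgHomOfPowThree_apply (hA : A ^ 3 = -A) (z : ℂ) (t : ℝ) :
    complexProdAlgHomOfPowThree hA (z, t) = z.re • -A ^ 2 + z.im • A + t • (1 + A ^ 2) :=
  rfl

theorem exp_smul_of_pow_three_eq_neg (hA : A ^ 3 = -A) (φ : ℝ) :
    NormedSpace.exp (φ • A) = 1 + Real.sin φ • A + (1 - Real.cos φ) • A ^ 2 := by
  let _ : NormedAlgebra ℚ 𝔸 := .restrictScalars ℚ ℝ 𝔸
  set f := complexProdAlgHomOfPowThree hA
  have hexp : NormedSpace.exp ((φ * Complex.I, 0) : ℂ × ℝ) =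
      (Real.cos φ + Real.sin φ * Complex.I, 1) := by
    ext1
    · rw [Prod.fst_exp, ← Complex.exp_eq_exp_ℂ, Complex.exp_mul_I, ← Complex.ofReal_cos,
        ← Complex.ofReal_sin]
    · rw [Prod.snd_exp, NormedSpace.exp_zero]
  have hf : Continuous f := f.toLinearMap.continuous_of_finiteDimensional
  have hφA : f (φ * Complex.I, 0) = φ • A := by simp [f, complexProdAlgHomOfPowThree_apply]
  rw [← hφA, ← NormedSpace.map_exp f hf, hexp, complexProdAlgHomOfPowThree_apply]
  simp only [Complex.add_re, Complex.add_im, Complex.ofReal_re, Complex.ofReal_im, Complex.mul_re,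
    Complex.mul_im, Complex.I_re, Complex.I_im]
  module

end Rodrigues

/-- The matrix of `v ↦ (x, 0, z) × v`. -/
def crossMatrixXZ (x z : ℝ) : Matrix (Fin 3) (Fin 3) ℝ :=
  !![0, -z, 0; z, 0, -x; 0, x, 0]

lemma crossMatrixXZ_sq (x z : ℝ) : crossMatrixXZ x z ^ 2 =
    !![-z ^ 2, 0, x * z; 0, -(x ^ 2 + z ^ 2), 0; x * z, 0, -x ^ 2] := by
  rw [sq, crossMatrixXZ, Matrix.mul_fin_three]
  ext i j
  fin_cases i <;> fin_cases j <;>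
    simp only [Matrix.of_apply, Matrix.cons_val', Matrix.cons_val, Matrix.cons_val_zero,
      Matrix.cons_val_one, Matrix.cons_val_fin_one, Fin.isValue, Fin.reduceFinMk, Fin.zero_eta,
      Fin.mk_one] <;>
    ring

lemma crossMatrixXZ_pow_three {x z : ℝ} (h : x ^ 2 + z ^ 2 = 1) :
    crossMatrixXZ x z ^ 3 = -crossMatrixXZ x z := by
  rw [pow_succ, crossMatrixXZ_sq, h, crossMatrixXZ, Matrix.mul_fin_three]
  ext i j
  fin_cases i <;> fin_cases j <;>
    simp only [Matrix.neg_apply, Matrix.of_apply, Matrix.cons_val', Matrix.cons_val,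
      Matrix.cons_val_zero, Matrix.cons_val_one, Matrix.cons_val_fin_one, Fin.isValue,
      Fin.reduceFinMk, Fin.zero_eta, Fin.mk_one] <;>
    grind

lemma OmegaL_eq_crossMatrixXZ (r : ℝ) : OmegaL r = crossMatrixXZ √(1 - r ^ 2) r :=
  rfl

lemma OmegaR_eq_crossMatrixXZ (r : ℝ) : OmegaR r = crossMatrixXZ (-√(1 - r ^ 2)) r := by
  simp [OmegaR, crossMatrixXZ]

attribute [local instance] Matrix.linftyOpNormedRing Matrix.linftyOpNormedAlgebra

lemma RL_eq_rodrigues {r : ℝ} (hr : r ^ 2 ≤ 1) (φ : ℝ) :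
    RL r φ = 1 + Real.sin φ • OmegaL r + (1 - Real.cos φ) • OmegaL r ^ 2 := by
  refine exp_smul_of_pow_three_eq_neg (crossMatrixXZ_pow_three ?_) φ
  rw [Real.sq_sqrt (by linarith)]
  ring

lemma RR_eq_rodrigues {r : ℝ} (hr : r ^ 2 ≤ 1) (φ : ℝ) :
    RR r φ = 1 + Real.sin φ • OmegaR r + (1 - Real.cos φ) • OmegaR r ^ 2 := by
  rw [RR, OmegaR_eq_crossMatrixXZ]
  refine exp_smul_of_pow_three_eq_neg (crossMatrixXZ_pow_three ?_) φ
  rw [neg_sq, Real.sq_sqrt (by linarith)]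
  ring

theorem stmt_13 (r β : ℝ) (hr : r ∈ Set.Ioo (0 : ℝ) 1) :
    RL r Real.pi * RR r (Real.pi + β) * RL r Real.pi =
      !![(1 - 4 * r ^ 2) ^ 2 * (1 - r ^ 2) - r ^ 2 * (3 - 4 * r ^ 2) ^ 2 * Real.cos β,
         r * (4 * r ^ 2 - 3) * Real.sin β,
         r * Real.sqrt (1 - r ^ 2) * (4 * r ^ 2 - 1) * (4 * r ^ 2 - 3) * (1 + Real.cos β);
         -(r * (4 * r ^ 2 - 3) * Real.sin β),
         -Real.cos β,
         Real.sqrt (1 - r ^ 2) * (4 * r ^ 2 - 1) * Real.sin β;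
         r * Real.sqrt (1 - r ^ 2) * (4 * r ^ 2 - 1) * (4 * r ^ 2 - 3) * (1 + Real.cos β),
         -(Real.sqrt (1 - r ^ 2) * (4 * r ^ 2 - 1) * Real.sin β),
         r ^ 2 * (3 - 4 * r ^ 2) ^ 2 - (4 * r ^ 2 - 1) ^ 2 * (1 - r ^ 2) * Real.cos β] := by
  have hr2 : r ^ 2 ≤ 1 := pow_le_one₀ hr.1.le hr.2.le
  have hq : √(1 - r ^ 2) ^ 2 = 1 - r ^ 2 := Real.sq_sqrt (by linarith)
  rw [RL_eq_rodrigues hr2, RR_eq_rodrigues hr2, OmegaL_eq_crossMatrixXZ, OmegaR_eq_crossMatrixXZ,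
    crossMatrixXZ_sq, crossMatrixXZ_sq, Real.sin_pi, Real.cos_pi, add_comm π β, Real.sin_add_pi,
    Real.cos_add_pi]
  generalize √(1 - r ^ 2) = q at hq ⊢
  ext i j
  fin_cases i <;> fin_cases j <;>
    simp only [Matrix.mul_apply, Fin.sum_univ_succ, Finset.univ_unique, Fin.default_eq_zero,
      Finset.sum_singleton, Matrix.add_apply, Matrix.smul_apply, Matrix.one_apply,
      Matrix.of_apply, Matrix.cons_val', Matrix.cons_val, Matrix.cons_val_zero, Matrix.cons_val_one,
      Matrix.cons_val_succ, Matrix.cons_val_fin_one, Fin.succ_zero_eq_one, Fin.succ_one_eq_two,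
      Fin.isValue, Fin.reduceFinMk, Fin.zero_eta, Fin.mk_one, Fin.reduceEq, ↓reduceIte, smul_eq_mul,
      crossMatrixXZ] <;>
    grind
end

section
/- For every r ∈ (0,1) and every β ∈ ℝ, with q = √(1−r²), the product R_L(π)·R_R(π+β)·R_L(π+β)·R_R(π) equals the 3×3 matrix with entries: (1,1) = 1 − 20r² + 75r⁴ − 104r⁶ + 48r⁸ + 4r²(16r⁶−32r⁴+19r²−3)cos β + r⁴(3−4r²)² cos 2β; (1,2) = −2r(1−5r²+4r⁴ + r²(4r²−3)cos β) sin β; (1,3) = r·q·(−6+41r²−80r⁴+48r⁶ + (−2+36r²−96r⁴+64r⁶)cos β + r²(3−16r²+16r⁴)cos 2β); (2,1) = −(1,2) entry; (2,2) = 1 − r² + r² cos 2β; (2,3) = 2r²·q·(4r²−3+(4r²−1)cos β) sin β; (3,1) = −(1,3) entry; (3,2) = (2,3) entry; (3,3) = 1 − 19r² + 75r⁴ − 104r⁶ + 48r⁸ + 4r²(−3+19r²−32r⁴+16r⁶)cos β + r²(1−4r²)²(r²−1)cos 2β. -/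
open Real

/-!
The generators `OmegaL r` and `OmegaR r` are the cross-product matrices of the unit vectors
`(±√(1 - r²), 0, r)`. Such a matrix `Ω = [v]ₓ` satisfies `Ω² = v vᵀ - 1` and `Ω³ = -Ω`, so
`exp (φ Ω)` is given by Rodrigues' formula `cos φ • 1 + sin φ • Ω + (1 - cos φ) • v vᵀ`. With
these closed forms each entry of the product is a polynomial identity in `r`, `√(1 - r²)`,
`cos β`, `sin β`, which holds modulo `√(1 - r²)² = 1 - r²` and `sin² β + cos² β = 1`.
-/

open Matrix

section Rodrigues

variable {A : Type*} [NormedRing A] [NormedAlgebra ℝ A] {Ω : A}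

theorem hasDerivAt_rodrigues (hΩ : Ω * Ω * Ω = -Ω) (t : ℝ) :
    HasDerivAt (fun u : ℝ => 1 + sin u • Ω + (1 - cos u) • (Ω * Ω))
      (Ω * (1 + sin t • Ω + (1 - cos t) • (Ω * Ω))) t := by
  have hΩ' : Ω * (Ω * Ω) = -Ω := by rw [← mul_assoc, hΩ]
  have h := (((hasDerivAt_sin t).smul_const Ω).const_add 1).add
    (((hasDerivAt_cos t).const_sub 1).smul_const (Ω * Ω))
  refine h.congr_deriv ?_
  simp only [sub_smul, one_smul, neg_neg, mul_add, mul_sub, mul_one, mul_smul_comm, hΩ', smul_neg]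
  abel

variable [CompleteSpace A]

theorem eq_exp_smul_of_hasDerivAt {F : ℝ → A} (hF : ∀ t, HasDerivAt F (Ω * F t) t)
    (hF0 : F 0 = 1) (φ : ℝ) : F φ = NormedSpace.exp (φ • Ω) := by
  have hconst (t : ℝ) : NormedSpace.exp (t • -Ω) * F t = 1 := by
    have hderiv (t : ℝ) : HasDerivAt (fun u => NormedSpace.exp (u • -Ω) * F u) 0 t := by
      refine ((hasDerivAt_exp_smul_const (-Ω) t).mul (hF t)).congr_deriv ?_
      rw [mul_neg, neg_mul, mul_assoc, neg_add_cancel]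
    simpa [hF0] using is_const_of_deriv_eq_zero (fun t => (hderiv t).differentiableAt)
      (fun t => (hderiv t).deriv) t 0
  have hinv : NormedSpace.exp (φ • Ω) * NormedSpace.exp (φ • -Ω) = 1 := by
    rw [smul_neg,
      ← NormedSpace.exp_add_of_commute_of_mem_ball (𝕂 := ℝ) (Commute.refl _).neg_right,
      add_neg_cancel, NormedSpace.exp_zero] <;> simp [NormedSpace.expSeries_radius_eq_top]
  rw [← one_mul (F φ), ← hinv, mul_assoc, hconst, mul_one]

theorem exp_smul_eq_of_mul_mul_self_eq_neg (hΩ : Ω * Ω * Ω = -Ω) (φ : ℝ) :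
    NormedSpace.exp (φ • Ω) = 1 + sin φ • Ω + (1 - cos φ) • (Ω * Ω) :=
  (eq_exp_smul_of_hasDerivAt (hasDerivAt_rodrigues hΩ) (by simp) φ).symm

end Rodrigues

def crossMatrix {R : Type*} [Zero R] [Neg R] (v : Fin 3 → R) : Matrix (Fin 3) (Fin 3) R :=
  !![0, -v 2, v 1; v 2, 0, -v 0; -v 1, v 0, 0]

section crossMatrix

variable {R : Type*} [CommRing R] {v : Fin 3 → R}

theorem crossMatrix_mul_self (hv : v ⬝ᵥ v = 1) :
    crossMatrix v * crossMatrix v = vecMulVec v v - 1 := by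
  simp only [dotProduct, Fin.sum_univ_three] at hv
  ext i j
  fin_cases i <;> fin_cases j <;>
    simp [crossMatrix, vecMulVec, mul_apply, Fin.sum_univ_three] <;> grind

theorem vecMulVec_self_mul_crossMatrix (v : Fin 3 → R) : vecMulVec v v * crossMatrix v = 0 := by
  ext i j
  fin_cases i <;> fin_cases j <;>
    simp [crossMatrix, vecMulVec, mul_apply, Fin.sum_univ_three] <;> ring

theorem crossMatrix_mul_mul_self (hv : v ⬝ᵥ v = 1) :
    crossMatrix v * crossMatrix v * crossMatrix v = -crossMatrix v := by
  rw [crossMatrix_mul_self hv, sub_mul, one_mul, vecMulVec_self_mul_crossMatrix, zero_sub]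

end crossMatrix

-- `NormedSpace.exp` depends only on the topology, so any Banach-algebra norm on matrices will do.
open scoped Matrix.Norms.Operator in
theorem exp_smul_crossMatrix {v : Fin 3 → ℝ} (hv : v ⬝ᵥ v = 1) (φ : ℝ) :
    NormedSpace.exp (φ • crossMatrix v) =
      cos φ • 1 + sin φ • crossMatrix v + (1 - cos φ) • vecMulVec v v := by
  refine (exp_smul_eq_of_mul_mul_self_eq_neg (crossMatrix_mul_mul_self hv) φ).trans ?_
  rw [crossMatrix_mul_self hv]
  module

theorem OmegaL_eq_crossMatrix (r : ℝ) : OmegaL r = crossMatrix ![√(1 - r ^ 2), 0, r] := by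
  simp [OmegaL, crossMatrix]

theorem OmegaR_eq_crossMatrix (r : ℝ) : OmegaR r = crossMatrix ![-√(1 - r ^ 2), 0, r] := by
  simp [OmegaR, crossMatrix]

theorem exp_smul_crossMatrix_of_sq_add_sq {q r : ℝ} (h : q ^ 2 + r ^ 2 = 1) (φ : ℝ) :
    NormedSpace.exp (φ • crossMatrix ![q, 0, r]) =
      !![cos φ + (1 - cos φ) * q ^ 2, -(sin φ * r), (1 - cos φ) * q * r;
        sin φ * r, cos φ, -(sin φ * q);
        (1 - cos φ) * q * r, sin φ * q, cos φ + (1 - cos φ) * r ^ 2] := by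
  rw [exp_smul_crossMatrix (by simp [dotProduct, Fin.sum_univ_three, ← sq, h])]
  ext i j
  fin_cases i <;> fin_cases j <;> simp [crossMatrix, vecMulVec, sq] <;> ring

theorem stmt_14 (r β : ℝ) (hr : r ∈ Set.Ioo (0 : ℝ) 1) :
    RL r Real.pi * RR r (Real.pi + β) * RL r (Real.pi + β) * RR r Real.pi =
      !![1 - 20 * r ^ 2 + 75 * r ^ 4 - 104 * r ^ 6 + 48 * r ^ 8 +
           4 * r ^ 2 * (16 * r ^ 6 - 32 * r ^ 4 + 19 * r ^ 2 - 3) * Real.cos β +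
           r ^ 4 * (3 - 4 * r ^ 2) ^ 2 * Real.cos (2 * β),
         -(2 * r * (1 - 5 * r ^ 2 + 4 * r ^ 4 + r ^ 2 * (4 * r ^ 2 - 3) * Real.cos β) *
           Real.sin β),
         r * Real.sqrt (1 - r ^ 2) *
           (-6 + 41 * r ^ 2 - 80 * r ^ 4 + 48 * r ^ 6 +
             (-2 + 36 * r ^ 2 - 96 * r ^ 4 + 64 * r ^ 6) * Real.cos β +
             r ^ 2 * (3 - 16 * r ^ 2 + 16 * r ^ 4) * Real.cos (2 * β));
         2 * r * (1 - 5 * r ^ 2 + 4 * r ^ 4 + r ^ 2 * (4 * r ^ 2 - 3) * Real.cos β) *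
           Real.sin β,
         1 - r ^ 2 + r ^ 2 * Real.cos (2 * β),
         2 * r ^ 2 * Real.sqrt (1 - r ^ 2) * (4 * r ^ 2 - 3 + (4 * r ^ 2 - 1) * Real.cos β) *
           Real.sin β;
         -(r * Real.sqrt (1 - r ^ 2) *
           (-6 + 41 * r ^ 2 - 80 * r ^ 4 + 48 * r ^ 6 +
             (-2 + 36 * r ^ 2 - 96 * r ^ 4 + 64 * r ^ 6) * Real.cos β +
             r ^ 2 * (3 - 16 * r ^ 2 + 16 * r ^ 4) * Real.cos (2 * β))),
         2 * r ^ 2 * Real.sqrt (1 - r ^ 2) * (4 * r ^ 2 - 3 + (4 * r ^ 2 - 1) * Real.cos β) *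
           Real.sin β,
         1 - 19 * r ^ 2 + 75 * r ^ 4 - 104 * r ^ 6 + 48 * r ^ 8 +
           4 * r ^ 2 * (-3 + 19 * r ^ 2 - 32 * r ^ 4 + 16 * r ^ 6) * Real.cos β +
           r ^ 2 * (1 - 4 * r ^ 2) ^ 2 * (r ^ 2 - 1) * Real.cos (2 * β)] := by
  have hL : √(1 - r ^ 2) ^ 2 + r ^ 2 = 1 := by
    rw [sq_sqrt (by nlinarith [hr.1, hr.2])]
    ring
  have hR : (-√(1 - r ^ 2)) ^ 2 + r ^ 2 = 1 := by rwa [neg_sq]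
  have hβ := sin_sq_add_cos_sq β
  simp only [RL, RR, OmegaL_eq_crossMatrix, OmegaR_eq_crossMatrix,
    exp_smul_crossMatrix_of_sq_add_sq hL, exp_smul_crossMatrix_of_sq_add_sq hR,
    sin_pi, cos_pi, sin_add, cos_add, cos_two_mul, mul_fin_three, EmbeddingLike.apply_eq_iff_eq,
    vecCons_inj, and_true]
  refine ⟨⟨?_, ?_, ?_⟩, ⟨?_, ?_, ?_⟩, ?_, ?_, ?_⟩ <;> grind
end

section
/- Let 0 < r ≤ 1/√2 and β ∈ (0, π), set d = 1 − 2r²(1−r²)(1+cos β), and let φ ∈ ℝ satisfy sin φ = sin β·(1−2r²)/d and cos φ = −(4r²(r²−1) + cos β·(1+(1−2r²)²))/(2d). Then the (2,3) entry of the product R_L(φ)·R_R(π−β)·R_L(φ) equals √(1−r²)·(4r²−1) sin β, which is the (2,3) entry of R_L(π)·R_R(π+β)·R_L(π). -/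
open Real

/-! Each factor is the exponential of a generator `K` of rotations about a unit axis, and such a `K`
satisfies `K³ = -K`, so Rodrigues' formula `exp (φ K) = 1 + sin φ K + (1 - cos φ) K²` turns the
(2,3) entry of the product into an explicit polynomial in `r`, `√(1 - r²)` and the sines and
cosines of the two arc angles. At `φ = π` it collapses at once. For the given `φ`, clearing the
common denominator `d` of `sin φ` and `cos φ` leaves a multiple of `sin² β + cos² β - 1`. -/

section Rodrigues

variable {𝔸 : Type*} [NormedRing 𝔸] [NormedAlgebra ℝ 𝔸] [CompleteSpace 𝔸]

theorem exp_smul_eq_of_pow_three_eq_neg_s16 {A : 𝔸} (hA : A ^ 3 = -A) (t : ℝ) :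
    NormedSpace.exp (t • A) = 1 + sin t • A + (1 - cos t) • A ^ 2 := by
  set F : ℝ → 𝔸 := fun u => 1 + sin u • A + (1 - cos u) • A ^ 2
  have hF : ∀ u, HasDerivAt F (A * F u) u := by
    intro u
    have hAF : A * F u = cos u • A + sin u • A ^ 2 := by
      simp only [F, mul_add, mul_one, mul_smul_comm, ← sq, ← pow_succ', hA]
      module
    rw [hAF]
    refine (((hasDerivAt_sin u).smul_const A).const_add 1 |>.add
      (((hasDerivAt_cos u).const_sub 1).smul_const (A ^ 2))).congr_deriv ?_
    rw [neg_neg]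
  have hG : ∀ u, HasDerivAt (fun v => NormedSpace.exp (v • -A) * F v) 0 u := by
    intro u
    refine ((hasDerivAt_exp_smul_const (-A) u).mul (hF u)).congr_deriv ?_
    rw [mul_assoc, neg_mul, mul_neg, neg_add_cancel]
  have hG1 : NormedSpace.exp (t • -A) * F t = 1 := by
    simpa [F] using is_const_of_deriv_eq_zero (fun u => (hG u).differentiableAt)
      (fun u => (hG u).deriv) t 0
  have hball (x : 𝔸) : x ∈ Metric.eball 0 (NormedSpace.expSeries ℝ 𝔸).radius :=
    (NormedSpace.expSeries_radius_eq_top ℝ 𝔸).symm ▸ edist_lt_top _ _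
  calc NormedSpace.exp (t • A)
      = NormedSpace.exp (t • A) * (NormedSpace.exp (t • -A) * F t) := by rw [hG1, mul_one]
    _ = F t := by
      rw [← mul_assoc, smul_neg, ← NormedSpace.exp_add_of_commute_of_mem_ball
        (Commute.refl _).neg_right (hball _) (hball _), add_neg_cancel, NormedSpace.exp_zero,
        one_mul]

end Rodrigues

open Matrix

/-- The generator of rotations about the unit axis `![b, 0, a]`: `OmegaL r` and `OmegaR r` are
the cases `b = √(1 - r²)` and `b = -√(1 - r²)`. -/
def turnGenerator (a b : ℝ) : Matrix (Fin 3) (Fin 3) ℝ :=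
  !![0, -a, 0; a, 0, -b; 0, b, 0]

theorem OmegaL_eq_turnGenerator (r : ℝ) : OmegaL r = turnGenerator r (√(1 - r ^ 2)) := rfl

theorem OmegaR_eq_turnGenerator (r : ℝ) : OmegaR r = turnGenerator r (-√(1 - r ^ 2)) := by
  simp [OmegaR, turnGenerator]

theorem turnGenerator_mulVec_axis (a b : ℝ) : turnGenerator a b *ᵥ ![b, 0, a] = 0 := by
  ext i
  fin_cases i <;> simp [turnGenerator, mulVec, dotProduct, Fin.sum_univ_three, mul_comm]

section turnGenerator

variable {a b : ℝ}

theorem turnGenerator_sq (hab : a ^ 2 + b ^ 2 = 1) :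
    turnGenerator a b ^ 2 = vecMulVec ![b, 0, a] ![b, 0, a] - 1 := by
  ext i j
  fin_cases i <;> fin_cases j <;>
    simp [turnGenerator, sq, mul_apply, Fin.sum_univ_three, vecMulVec] <;>
    linarith

theorem turnGenerator_pow_three (hab : a ^ 2 + b ^ 2 = 1) :
    turnGenerator a b ^ 3 = -turnGenerator a b := by
  rw [pow_succ', turnGenerator_sq hab, mul_sub, mul_vecMulVec, turnGenerator_mulVec_axis,
    zero_vecMulVec, zero_sub, mul_one]

attribute [local instance] Matrix.linftyOpNormedRing Matrix.linftyOpNormedAlgebra in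
theorem exp_smul_turnGenerator (hab : a ^ 2 + b ^ 2 = 1) (φ : ℝ) :
    NormedSpace.exp (φ • turnGenerator a b) =
      !![cos φ + (1 - cos φ) * b ^ 2, -(sin φ * a), (1 - cos φ) * (a * b);
        sin φ * a, cos φ, -(sin φ * b);
        (1 - cos φ) * (a * b), sin φ * b, cos φ + (1 - cos φ) * a ^ 2] := by
  refine (exp_smul_eq_of_pow_three_eq_neg_s16 (turnGenerator_pow_three hab) φ).trans ?_
  rw [turnGenerator_sq hab]
  ext i j
  fin_cases i <;> fin_cases j <;> simp [turnGenerator, vecMulVec, -mul_eq_mul_left_iff] <;> ring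

end turnGenerator

theorem RL_mul_RR_mul_RL_apply_one_two {r : ℝ} (hr : r ^ 2 ≤ 1) (φ ψ : ℝ) :
    (RL r φ * RR r ψ * RL r φ) 1 2 = √(1 - r ^ 2) *
      ((1 - 2 * r ^ 2) * (sin ψ * (cos φ ^ 2 - sin φ ^ 2) - 2 * sin φ * cos φ * cos ψ) +
        2 * r ^ 2 * (sin ψ * cos φ + sin φ * (1 - 2 * cos φ - cos ψ)) -
        4 * r ^ 4 * sin φ * (1 - cos φ) * (1 - cos ψ)) := by
  have hq : r ^ 2 + √(1 - r ^ 2) ^ 2 = 1 := by rw [sq_sqrt (by linarith)]; ring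
  rw [RL, RR, OmegaL_eq_turnGenerator, OmegaR_eq_turnGenerator, exp_smul_turnGenerator hq,
    exp_smul_turnGenerator (by rwa [neg_sq])]
  simp only [mul_apply, Fin.sum_univ_three, of_apply, cons_val', cons_val_zero, cons_val_one,
    cons_val, cons_val_fin_one]
  linear_combination √(1 - r ^ 2) * sin φ *
    (2 * r ^ 2 * (1 - cos φ) * (1 - cos ψ) - sin φ * sin ψ) * hq

theorem stmt_16_general (r β φ : ℝ) (hr : 0 < r) (hr' : r ≤ 1 / Real.sqrt 2)
    (hsin : Real.sin φ =
      Real.sin β * (1 - 2 * r ^ 2) / (1 - 2 * r ^ 2 * (1 - r ^ 2) * (1 + Real.cos β)))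
    (hcos : Real.cos φ =
      -((4 * r ^ 2 * (r ^ 2 - 1) + Real.cos β * (1 + (1 - 2 * r ^ 2) ^ 2)) /
        (2 * (1 - 2 * r ^ 2 * (1 - r ^ 2) * (1 + Real.cos β))))) :
    (RL r φ * RR r (Real.pi - β) * RL r φ) 1 2 =
      Real.sqrt (1 - r ^ 2) * (4 * r ^ 2 - 1) * Real.sin β ∧
    (RL r Real.pi * RR r (Real.pi + β) * RL r Real.pi) 1 2 =
      Real.sqrt (1 - r ^ 2) * (4 * r ^ 2 - 1) * Real.sin β := by
  have hr1 : r ^ 2 ≤ 1 := by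
    refine pow_le_one₀ hr.le (hr'.trans ?_)
    rw [div_le_one (by positivity)]
    exact one_le_sqrt.mpr one_le_two
  -- if `d = 0`, division by zero would make both `sin φ` and `cos φ` vanish
  have hd : 1 - 2 * r ^ 2 * (1 - r ^ 2) * (1 + cos β) ≠ 0 := by
    intro hd
    simpa [hsin, hcos, hd] using sin_sq_add_cos_sq φ
  rw [RL_mul_RR_mul_RL_apply_one_two hr1, RL_mul_RR_mul_RL_apply_one_two hr1,
    mul_assoc (√(1 - r ^ 2)) (4 * r ^ 2 - 1), sin_pi_sub, cos_pi_sub, add_comm π β, sin_add_pi,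
    cos_add_pi, sin_pi, cos_pi]
  constructor
  · congr 1
    rw [hsin, hcos]
    field_simp
    linear_combination -4 * sin β * (1 - 2 * r ^ 2) ^ 3 * sin_sq_add_cos_sq β
  · ring

theorem stmt_16 (r β φ : ℝ) (hr : 0 < r) (hr' : r ≤ 1 / Real.sqrt 2)
    (hβ : β ∈ Set.Ioo (0 : ℝ) Real.pi)
    (hsin : Real.sin φ =
      Real.sin β * (1 - 2 * r ^ 2) / (1 - 2 * r ^ 2 * (1 - r ^ 2) * (1 + Real.cos β)))
    (hcos : Real.cos φ =
      -((4 * r ^ 2 * (r ^ 2 - 1) + Real.cos β * (1 + (1 - 2 * r ^ 2) ^ 2)) /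
        (2 * (1 - 2 * r ^ 2 * (1 - r ^ 2) * (1 + Real.cos β))))) :
    (RL r φ * RR r (Real.pi - β) * RL r φ) 1 2 =
      Real.sqrt (1 - r ^ 2) * (4 * r ^ 2 - 1) * Real.sin β ∧
    (RL r Real.pi * RR r (Real.pi + β) * RL r Real.pi) 1 2 =
      Real.sqrt (1 - r ^ 2) * (4 * r ^ 2 - 1) * Real.sin β :=
  stmt_16_general r β φ hr hr' hsin hcos
end
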